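/- (Entanglement removal, abstract form) Let q, p be distinct primes and let v_1,…,v_k ∈ (Z/q)^{2n} be vectors representing the generators of an entanglement-assisted code, with integer lifts having entries in {0,…,q−1} and forming a matrix of canonical form [I_k X_2 | Z_1 Z_2]. Then there exist integer vectors v'_1,…,v'_k ∈ Z^{2n} with v'_i ≡ v_i (mod q) such that the reductions of v'_1,…,v'_k mod p are pairwise symplectically orthogonal in (Z/p)^{2n}, i.e., they generate an abelian (entanglement-free) stabilizer group over p levels. -/

import Mathlib

/-- Integer symplectic product ⊙(u,v) = Σ_k (v_z)_k(u_x)_k − (v_x)_k(u_z)_k. -/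
def symp {ι : Type} [Fintype ι] (u v : (ι → ℤ) × (ι → ℤ)) : ℤ :=
  ∑ i, (v.2 i * u.1 i - v.1 i * u.2 i)

/-!
Only the entries of the `Z`-block in the identity columns of `[I_k X_2 | Z_1 Z_2]` are changed,
each by a multiple of `q`. Adding `q a_i` to the `Z_1`-part of generator `i` shifts the symplectic
product of generators `i` and `j` by `q ((a_j)_i - (a_i)_j)`. Since `q` is invertible mod `p`,
for every pair `i < j` the single unknown `(a_j)_i` can be chosen to cancel that product mod `p`;
antisymmetry of the symplectic product takes care of the pairs `i > j`.
-/

open Finset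

section Symp

variable {ι : Type} [Fintype ι]

theorem symp_swap (u v : (ι → ℤ) × (ι → ℤ)) : symp v u = -symp u v := by
  simp only [symp, ← sum_neg_distrib]
  exact sum_congr rfl fun _ _ => by ring

theorem symp_add_snd (x y z w a b : ι → ℤ) :
    symp (x, z + a) (y, w + b) = symp (x, z) (y, w) + symp (x, a) (y, b) := by
  simp only [symp, Pi.add_apply, ← sum_add_distrib]
  exact sum_congr rfl fun _ _ => by ring

theorem symp_single_one [DecidableEq ι] (i j : ι) (a b : ι → ℤ) :
    symp (Pi.single i 1, a) (Pi.single j 1, b) = b i - a j := by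
  simp [symp, sum_sub_distrib, Pi.single_apply]

theorem symp_sumElim_zero {κ : Type} [Fintype κ] (x y : ι ⊕ κ → ℤ) (a b : ι → ℤ) :
    symp (x, Sum.elim a 0) (y, Sum.elim b 0) = symp (x ∘ Sum.inl, a) (y ∘ Sum.inl, b) := by
  simp [symp, Fintype.sum_sum_type]

end Symp

/-- The correction is `A j i = -r S i j` for `i < j` and `0` otherwise, where `q r ≡ 1 (mod p)`. -/
theorem exists_dvd_add_mul_sub_of_antisymm {ι : Type} [LinearOrder ι] {p q : ℤ}
    (hqp : IsCoprime q p) (S : ι → ι → ℤ) (hS : ∀ i j, S j i = -S i j) :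
    ∃ A : ι → ι → ℤ, ∀ i j, i ≠ j → p ∣ S i j + q * (A j i - A i j) := by
  obtain ⟨r, s, hrs⟩ := hqp
  refine ⟨fun j i => if i < j then -r * S i j else 0, fun i j hij => ⟨S i j * s, ?_⟩⟩
  have hcorr : q * ((if i < j then -r * S i j else 0) - if j < i then -r * S j i else 0)
      = -r * q * S i j := by
    rcases hij.lt_or_gt with h | h
    · rw [if_pos h, if_neg h.not_gt]; ring
    · rw [if_neg h.not_gt, if_pos h, hS i j]; ring
  rw [hcorr]
  linear_combination -S i j * hrs

theorem stmt17_general (q p k m : ℕ) [Fact (Nat.Prime q)] [Fact (Nat.Prime p)] (hqp : q ≠ p)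
    (Vx Vz : Matrix (Fin k) (Fin k ⊕ Fin m) ℤ)
    (hId : ∀ i j, Vx i (Sum.inl j) = if i = j then 1 else 0) :
    ∃ Vx' Vz' : Matrix (Fin k) (Fin k ⊕ Fin m) ℤ,
      (∀ i c, (q : ℤ) ∣ (Vx' i c - Vx i c) ∧ (q : ℤ) ∣ (Vz' i c - Vz i c)) ∧
      (∀ i j : Fin k, i ≠ j → (p : ℤ) ∣ symp (Vx' i, Vz' i) (Vx' j, Vz' j)) := by
  have hcop : IsCoprime (q : ℤ) p :=
    Nat.isCoprime_iff_coprime.mpr ((Nat.coprime_primes Fact.out Fact.out).mpr hqp)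
  obtain ⟨A, hA⟩ := exists_dvd_add_mul_sub_of_antisymm hcop
    (fun i j => symp (Vx i, Vz i) (Vx j, Vz j)) fun i j => symp_swap _ _
  have hVx : ∀ i, Vx i ∘ Sum.inl = Pi.single i 1 := fun i => by
    ext l
    simp [hId, Pi.single_apply, eq_comm]
  refine ⟨Vx, fun i => Vz i + Sum.elim ((q : ℤ) • A i) 0, fun i c => ⟨by simp, ?_⟩, ?_⟩
  · cases c <;> simp
  · intro i j hij
    rw [symp_add_snd, symp_sumElim_zero, hVx, hVx, symp_single_one]
    convert hA i j hij using 1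
    simp only [Pi.smul_apply, smul_eq_mul]
    ring

/-- entanglement removal, abstract form: q, p distinct primes; the generators
of the entanglement-assisted code are given by integer lifts (Vx, Vz) with entries in
{0,…,q−1} in canonical form [I_k X_2 | Z_1 Z_2] (columns indexed by Fin k ⊕ Fin m, m = n−k).
Then there exist integer vectors v'_i ≡ v_i (mod q) whose reductions mod p are pairwise
symplectically orthogonal, i.e. they generate an abelian (entanglement-free) stabilizer
group over p levels. -/
theorem stmt17 (q p k m : ℕ) [Fact (Nat.Prime q)] [Fact (Nat.Prime p)] (hqp : q ≠ p)
    (Vx Vz : Matrix (Fin k) (Fin k ⊕ Fin m) ℤ)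
    (hId : ∀ i j, Vx i (Sum.inl j) = if i = j then 1 else 0)
    (hbx : ∀ i c, 0 ≤ Vx i c ∧ Vx i c ≤ (q : ℤ) - 1)
    (hbz : ∀ i c, 0 ≤ Vz i c ∧ Vz i c ≤ (q : ℤ) - 1) :
    ∃ Vx' Vz' : Matrix (Fin k) (Fin k ⊕ Fin m) ℤ,
      (∀ i c, (q : ℤ) ∣ (Vx' i c - Vx i c) ∧ (q : ℤ) ∣ (Vz' i c - Vz i c)) ∧
      (∀ i j : Fin k, i ≠ j → (p : ℤ) ∣ symp (Vx' i, Vz' i) (Vx' j, Vz' j)) :=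
  stmt17_general q p k m hqp Vx Vz hId
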